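/- arXiv:2602.11610 — 8 statements merged into one kernel-verified Lean document; each statement's English description precedes it below -/
import Mathlib

section
/- (Method 1 controls the FDR at level π₀α, known-variance case.) Let (Ω, 𝔄, ℙ) be a probability space, m ≥ 1, α ∈ (0,1), and let N ⊆ {1,…,m} be the set of true null indices with m₀ = card(N). Suppose P₁,…,P_m : Ω → [0,1] and S₁,…,S_m : Ω → [0,∞) are random variables such that: (i) P₁,…,P_m are mutually independent; (ii) the random vector (S₁,…,S_m) is independent of the random vector (P₁,…,P_m); (iii) for every j ∈ N, ℙ(P_j ≤ t) ≤ t for all t ∈ [0,1]; and (iv) E[S_j] ≤ 1 for every j ∈ N. Define, pointwise on Ω, R = max{ r ∈ {0,1,…,m} : card{ j : P_j ≤ S_j · rα/m } ≥ r } and V = card{ j ∈ N : P_j ≤ S_j · Rα/m }. Then E[ V / max(R,1) ] ≤ (m₀/m) · α. -/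
open MeasureTheory ProbabilityTheory Finset

/-!
Write `R` for the number of rejections and `Rⱼ` for the number of rejections once `Pⱼ` is
replaced by `0`. Since the BH count is monotone in the p-values, `Pⱼ` is rejected iff
`Pⱼ ≤ Sⱼ Rⱼ α/m`, and then `R = Rⱼ ≥ 1`; hence
`V / max(R,1) = ∑_{j ∈ N} 1{Pⱼ ≤ Sⱼ Rⱼ α/m} / Rⱼ`. The pair `(S, P with Pⱼ := 0)` is
independent of `Pⱼ`, so conditioning on it and using super-uniformity bounds the `j`-th term
in expectation by `E[Sⱼ Rⱼ α/m / Rⱼ] = E[Sⱼ] α/m ≤ α/m`.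
-/

theorem Nat.sSup_setOf_le_and_eq_findGreatest (P : ℕ → Prop) [DecidablePred P] (n : ℕ) :
    sSup {r | r ≤ n ∧ P r} = Nat.findGreatest P n := by
  refine le_antisymm (csSup_le' fun r ⟨hrn, hr⟩ => Nat.le_findGreatest hrn hr) ?_
  rcases eq_or_ne (Nat.findGreatest P n) 0 with h | h
  · exact h ▸ Nat.zero_le _
  · exact le_csSup ⟨n, fun r hr => hr.1⟩
      ⟨Nat.findGreatest_le n, Nat.findGreatest_of_ne_zero rfl h⟩

namespace ProbabilityTheory

variable {Ω α β γ : Type*} [MeasurableSpace Ω] [MeasurableSpace α] [MeasurableSpace β]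
  [MeasurableSpace γ] {μ : Measure Ω}

theorem IndepFun.indepFun_prodMk_of_indepFun_prodMk [IsZeroOrProbabilityMeasure μ]
    {A : Ω → α} {B : Ω → β} {C : Ω → γ} (hA : Measurable A) (hB : Measurable B)
    (hC : Measurable C) (hAB : IndepFun A B μ) (hCAB : IndepFun C (fun ω => (A ω, B ω)) μ) :
    IndepFun A (fun ω => (C ω, B ω)) μ := by
  rw [IndepFun_iff_Indep]
  refine IndepSets.indep hA.comap_le (hC.prodMk hB).comap_le
    (@MeasurableSpace.isPiSystem_measurableSet Ω (.comap A inferInstance))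
    (isPiSystem_prod.comap _)
    (@MeasurableSpace.generateFrom_measurableSet Ω (.comap A inferInstance)).symm
    (by rw [← generateFrom_prod, MeasurableSpace.comap_generateFrom]; rfl) ?_
  rw [IndepSets_iff]
  rintro _ _ ⟨a, ha, rfl⟩ ⟨_, ⟨c, hc, b, hb, rfl⟩, rfl⟩
  have hCab := hCAB.measure_inter_preimage_eq_mul c (a ×ˢ b) hc (ha.prod hb)
  have hCb := hCAB.measure_inter_preimage_eq_mul c (Set.univ ×ˢ b) hc (.prod .univ hb)
  have hab := hAB.measure_inter_preimage_eq_mul a b ha hb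
  simp only [Set.mk_preimage_prod, Set.preimage_univ, Set.univ_inter] at hCab hCb ⊢
  calc μ (A ⁻¹' a ∩ (C ⁻¹' c ∩ B ⁻¹' b)) = μ (C ⁻¹' c ∩ (A ⁻¹' a ∩ B ⁻¹' b)) := by
        rw [Set.inter_left_comm]
    _ = μ (A ⁻¹' a) * μ (C ⁻¹' c ∩ B ⁻¹' b) := by rw [hCab, hab, hCb]; ring

theorem iIndepFun.indepFun_update {ι : Type*} [Fintype ι] [DecidableEq ι] {f : ι → Ω → β}
    (hf : iIndepFun f μ) (hmeas : ∀ i, Measurable (f i)) (j : ι) (b : β) :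
    IndepFun (f j) (fun ω => Function.update (f · ω) j b) μ := by
  have hsplit := hf.indepFun_finset {j} {j}ᶜ disjoint_compl_right hmeas
  let extend : (({j}ᶜ : Finset ι) → β) → ι → β := fun t k =>
    if hk : k = j then b else t ⟨k, by simpa using hk⟩
  have hextend : Measurable extend := by
    refine measurable_pi_lambda _ fun k => ?_
    by_cases hk : k = j
    · simp [extend, hk]
    · simpa [extend, hk] using measurable_pi_apply _
  convert hsplit.comp (measurable_pi_apply ⟨j, mem_singleton_self j⟩) hextend using 1
  · rfl
  funext ω k
  by_cases hk : k = j <;> simp [extend, hk]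

end ProbabilityTheory

section SuperUniform

variable {Ω E : Type*} [MeasurableSpace Ω] [MeasurableSpace E] {μ : Measure Ω}

def SuperUniform (X : Ω → ℝ) (μ : Measure Ω) : Prop :=
  ∀ t ∈ Set.Icc (0 : ℝ) 1, μ {ω | X ω ≤ t} ≤ ENNReal.ofReal t

variable [IsProbabilityMeasure μ] {X : Ω → ℝ}

theorem SuperUniform.measureReal_le (hX : SuperUniform X μ) (t : ℝ) :
    μ.real {ω | X ω ≤ t} ≤ max t 0 := by
  rcases lt_or_ge t 0 with ht | ht
  · have h0 : μ {ω | X ω ≤ 0} = 0 := by simpa using hX 0 ⟨le_rfl, zero_le_one⟩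
    have hnull : μ {ω | X ω ≤ t} = 0 := measure_mono_null (fun ω hω => le_trans hω ht.le) h0
    simp [measureReal_def, hnull]
  rcases le_or_gt t 1 with ht1 | ht1
  · exact (ENNReal.toReal_le_of_le_ofReal ht (hX t ⟨ht, ht1⟩)).trans (le_max_left _ _)
  · exact measureReal_le_one.trans (ht1.le.trans (le_max_left _ _))

/-- Conditioning on `W`, the event `X ≤ τ(W)` has probability at most `max (τ W) 0`. -/
theorem SuperUniform.integral_ite_le {W : Ω → E} (hX : SuperUniform X μ) (hXm : Measurable X)
    (hWm : Measurable W) (hXW : IndepFun X W μ) {τ h b : E → ℝ} (hτ : Measurable τ)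
    (hhm : Measurable h) (hbm : Measurable b) (hh : 0 ≤ h)
    (hhW : Integrable (fun ω => h (W ω)) μ) (hbW : Integrable (fun ω => b (W ω)) μ)
    (hτb : ∀ w, max (τ w) 0 * h w ≤ b w) :
    ∫ ω, (if X ω ≤ τ (W ω) then h (W ω) else 0) ∂μ ≤ ∫ ω, b (W ω) ∂μ := by
  set ν := μ.map X
  set κ := μ.map W
  let G : ℝ × E → ℝ := fun z => if z.1 ≤ τ z.2 then h z.2 else 0
  have hGm : Measurable G :=
    Measurable.ite (measurableSet_le measurable_fst (hτ.comp measurable_snd))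
      (hhm.comp measurable_snd) measurable_const
  have hGint : Integrable G (ν.prod κ) := by
    have hh_int : Integrable h κ :=
      (integrable_map_measure hhm.aestronglyMeasurable hWm.aemeasurable).mpr hhW
    refine (hh_int.comp_snd ν).mono' hGm.aestronglyMeasurable (ae_of_all _ fun z => ?_)
    simp only [G]
    split_ifs
    · exact (Real.norm_of_nonneg (hh _)).le
    · simpa using hh _
  have hlaw : μ.map (fun ω => (X ω, W ω)) = ν.prod κ :=
    (indepFun_iff_map_prod_eq_prod_map_map hXm.aemeasurable hWm.aemeasurable).mp hXW
  have hinner (w : E) : ∫ x, G (x, w) ∂ν ≤ b w :=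
    calc ∫ x, G (x, w) ∂ν = ν.real (Set.Iic (τ w)) * h w := by
          rw [← smul_eq_mul, ← integral_indicator_const _ measurableSet_Iic]
          rfl
      _ ≤ max (τ w) 0 * h w := by
          gcongr
          · exact hh w
          rw [map_measureReal_apply hXm measurableSet_Iic]
          exact hX.measureReal_le _
      _ ≤ b w := hτb w
  calc ∫ ω, (if X ω ≤ τ (W ω) then h (W ω) else 0) ∂μ = ∫ z, G z ∂(ν.prod κ) := by
        rw [← hlaw, integral_map (hXm.prodMk hWm).aemeasurable hGm.aestronglyMeasurable]
    _ = ∫ w, ∫ x, G (x, w) ∂ν ∂κ := integral_prod_symm G hGint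
    _ ≤ ∫ w, b w ∂κ := integral_mono hGint.integral_prod_right
        ((integrable_map_measure hbm.aestronglyMeasurable hWm.aemeasurable).mpr hbW) hinner
    _ = ∫ ω, b (W ω) ∂μ := integral_map hWm.aemeasurable hbm.aestronglyMeasurable

end SuperUniform

namespace WeightedBH

variable {ι : Type*} [Fintype ι] (c : ℝ)

/-- `c` stands for the paper's `α / m`. -/
noncomputable def count (s p : ι → ℝ) (r : ℕ) : ℕ := #{j | p j ≤ s j * (r * c)}

noncomputable def rejections (s p : ι → ℝ) : ℕ :=
  Nat.findGreatest (fun r => r ≤ count c s p r) (Fintype.card ι)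

noncomputable def leaveOneOutTerm [DecidableEq ι] (s p : ι → ℝ) (j : ι) : ℝ :=
  if p j ≤ s j * (rejections c s (Function.update p j 0) * c)
  then (rejections c s (Function.update p j 0) : ℝ)⁻¹ else 0

theorem measurable_count (r : ℕ) :
    Measurable fun w : (ι → ℝ) × (ι → ℝ) => count c w.1 w.2 r := by
  simp only [count, card_filter]
  refine Finset.measurable_sum _ fun j _ => Measurable.ite ?_ measurable_const measurable_const
  exact measurableSet_le measurable_snd.eval (measurable_fst.eval.mul_const _)

theorem measurable_rejections :
    Measurable fun w : (ι → ℝ) × (ι → ℝ) => rejections c w.1 w.2 :=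
  measurable_findGreatest fun r _ => measurable_count c r measurableSet_Ici

variable {c} {s p p' : ι → ℝ}

theorem count_anti (hp : p' ≤ p) (r : ℕ) : count c s p r ≤ count c s p' r :=
  card_le_card <| monotone_filter_right _ fun j _ hj => (hp j).trans hj

theorem rejections_le_count : rejections c s p ≤ count c s p (rejections c s p) :=
  Nat.findGreatest_spec (P := fun r => r ≤ count c s p r) (Nat.zero_le _) (Nat.zero_le _)

theorem le_rejections {r : ℕ} (hr : r ≤ Fintype.card ι) (hcount : r ≤ count c s p r) :
    r ≤ rejections c s p :=
  Nat.le_findGreatest hr hcount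

theorem rejections_anti (hp : p' ≤ p) : rejections c s p ≤ rejections c s p' :=
  Nat.findGreatest_mono_left (fun r hr => hr.trans (count_anti hp r)) _

variable [DecidableEq ι] {j : ι}

theorem one_le_rejections_update_zero (hc : 0 ≤ c) (hs : 0 ≤ s j) :
    1 ≤ rejections c s (Function.update p j 0) := by
  refine le_rejections (Fintype.card_pos_iff.mpr ⟨j⟩) (card_pos.mpr ⟨j, ?_⟩)
  simp only [mem_filter, mem_univ, Function.update_self, true_and]
  positivity

theorem rejections_eq_rejections_update_zero (hc : 0 ≤ c) (hs : 0 ≤ s j) (hp : 0 ≤ p j)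
    (hj : p j ≤ s j * (rejections c s (Function.update p j 0) * c)) :
    rejections c s p = rejections c s (Function.update p j 0) := by
  refine le_antisymm (rejections_anti (update_le_self_iff.mpr hp))
    (le_rejections (Nat.findGreatest_le _) (rejections_le_count.trans_eq ?_))
  -- `j` passes the test at level `rejections c s (update p j 0)` for both vectors
  refine congrArg card (filter_congr fun k _ => ?_)
  rcases eq_or_ne k j with rfl | hk
  · simp only [Function.update_self, hj, iff_true]
    positivity
  · rw [Function.update_of_ne hk]

theorem rejects_iff_rejects_update_zero (hc : 0 ≤ c) (hs : 0 ≤ s j) (hp : 0 ≤ p j) :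
    p j ≤ s j * (rejections c s p * c) ↔
      p j ≤ s j * (rejections c s (Function.update p j 0) * c) := by
  refine ⟨fun h => h.trans ?_, fun h => ?_⟩
  · gcongr
    exact rejections_anti (update_le_self_iff.mpr hp)
  · rwa [rejections_eq_rejections_update_zero hc hs hp h]

theorem card_div_max_rejections_eq_sum_leaveOneOutTerm (N : Finset ι) (hc : 0 ≤ c)
    (hs : ∀ j, 0 ≤ s j) (hp : ∀ j, 0 ≤ p j) :
    (#{j ∈ N | p j ≤ s j * (rejections c s p * c)} : ℝ) / (max (rejections c s p) 1 : ℕ) =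
      ∑ j ∈ N, leaveOneOutTerm c s p j := by
  rw [card_filter, Nat.cast_sum, sum_div]
  refine sum_congr rfl fun j _ => ?_
  have hiff := rejects_iff_rejects_update_zero (c := c) hc (hs j) (hp j)
  by_cases hj : p j ≤ s j * (rejections c s p * c)
  · have hR := rejections_eq_rejections_update_zero hc (hs j) (hp j) (hiff.mp hj)
    have hR1 := one_le_rejections_update_zero (p := p) hc (hs j)
    rw [leaveOneOutTerm, if_pos hj, if_pos (hiff.mp hj), hR, max_eq_left hR1]
    simp
  · rw [leaveOneOutTerm, if_neg hj, if_neg (hiff.not.mp hj)]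
    simp

variable {Ω : Type*} [MeasurableSpace Ω] {μ : Measure Ω} {P S : ι → Ω → ℝ}

theorem measurable_rejections_update_zero (hP : ∀ i, Measurable (P i))
    (hS : ∀ i, Measurable (S i)) (c : ℝ) (j : ι) :
    Measurable fun ω => (rejections c (S · ω) (Function.update (P · ω) j 0) : ℝ) :=
  measurable_from_top.comp <| (measurable_rejections c).comp <|
    (measurable_pi_lambda _ hS).prodMk (measurable_update_left.comp (measurable_pi_lambda _ hP))

theorem integrable_leaveOneOutTerm [IsFiniteMeasure μ] (hP : ∀ i, Measurable (P i))
    (hS : ∀ i, Measurable (S i)) (c : ℝ) (j : ι) :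
    Integrable (fun ω => leaveOneOutTerm c (S · ω) (P · ω) j) μ := by
  have hR := measurable_rejections_update_zero hP hS c j
  refine Integrable.of_bound (Measurable.ite (measurableSet_le (hP j)
    ((hS j).mul (hR.mul_const c))) hR.inv measurable_const).aestronglyMeasurable 1
    (ae_of_all _ fun ω => ?_)
  simp only [leaveOneOutTerm]
  split_ifs
  · exact (Real.norm_of_nonneg (by positivity)).trans_le (Nat.cast_inv_le_one _)
  · simp

theorem integral_leaveOneOutTerm_le [IsProbabilityMeasure μ] (hP : ∀ i, Measurable (P i))
    (hS : ∀ i, Measurable (S i)) (hPindep : iIndepFun P μ)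
    (hSP : IndepFun (fun ω i => S i ω) (fun ω i => P i ω) μ) (hc : 0 ≤ c)
    (hPj : SuperUniform (P j) μ) (hSj : Integrable (S j) μ) (hSj0 : ∀ ω, 0 ≤ S j ω) :
    ∫ ω, leaveOneOutTerm c (S · ω) (P · ω) j ∂μ ≤ c * ∫ ω, S j ω ∂μ := by
  have hSvec : Measurable fun ω i => S i ω := measurable_pi_lambda _ hS
  have hmask : Measurable fun ω => Function.update (P · ω) j 0 :=
    measurable_update_left.comp (measurable_pi_lambda _ hP)
  have hW := hSvec.prodMk hmask
  have hindep : IndepFun (P j) (fun ω => ((S · ω), Function.update (P · ω) j 0)) μ :=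
    (hPindep.indepFun_update hP j 0).indepFun_prodMk_of_indepFun_prodMk (hP j) hmask hSvec
      (hSP.comp measurable_id ((measurable_pi_apply j).prodMk measurable_update_left))
  let ρ : (ι → ℝ) × (ι → ℝ) → ℝ := fun w => rejections c w.1 w.2
  have hρ : Measurable ρ := measurable_from_top.comp (measurable_rejections c)
  have hρW : Integrable (fun ω => (ρ ((S · ω), Function.update (P · ω) j 0))⁻¹) μ :=
    .of_bound (hρ.comp hW).inv.aestronglyMeasurable 1 (ae_of_all _ fun ω =>
      (Real.norm_of_nonneg (by positivity)).trans_le (Nat.cast_inv_le_one _))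
  have hbound (w : (ι → ℝ) × (ι → ℝ)) :
      max (w.1 j * (ρ w * c)) 0 * (ρ w)⁻¹ ≤ max (w.1 j) 0 * c := by
    have hρ0 : 0 ≤ ρ w := Nat.cast_nonneg _
    have hmax := max_mul_of_nonneg (w.1 j) 0 (mul_nonneg hρ0 hc)
    rw [zero_mul] at hmax
    calc max (w.1 j * (ρ w * c)) 0 * (ρ w)⁻¹ = max (w.1 j) 0 * c * (ρ w * (ρ w)⁻¹) := by
          rw [← hmax]; ring
      _ ≤ max (w.1 j) 0 * c := mul_le_of_le_one_right (by positivity) mul_inv_le_one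
  calc ∫ ω, leaveOneOutTerm c (S · ω) (P · ω) j ∂μ ≤ ∫ ω, max (S j ω) 0 * c ∂μ :=
        hPj.integral_ite_le (τ := fun w => w.1 j * (ρ w * c)) (h := fun w => (ρ w)⁻¹)
          (b := fun w => max (w.1 j) 0 * c) (hP j) hW hindep
          (measurable_fst.eval.mul (hρ.mul_const c)) hρ.inv (by fun_prop)
          (fun w => inv_nonneg.mpr (Nat.cast_nonneg _)) hρW (hSj.pos_part.mul_const c) hbound
    _ = c * ∫ ω, S j ω ∂μ := by
        simp_rw [max_eq_left (hSj0 _)]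
        rw [integral_mul_const, mul_comm]

end WeightedBH

open WeightedBH in
theorem method1_epBH_fdr_control_general
    {Ω : Type*} [MeasurableSpace Ω] (μ : Measure Ω) [IsProbabilityMeasure μ]
    (m : ℕ) (α : ℝ) (hα : α ∈ Set.Ioo (0 : ℝ) 1)
    (N : Finset (Fin m))
    (P S : Fin m → Ω → ℝ)
    (hPmeas : ∀ j, Measurable (P j)) (hSmeas : ∀ j, Measurable (S j))
    (hPrange : ∀ j ω, P j ω ∈ Set.Icc (0 : ℝ) 1)
    (hSpos : ∀ j ω, 0 ≤ S j ω)
    -- (i) the p-values are mutually independent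
    (hPindep : iIndepFun P μ)
    -- (ii) the e-value vector is independent of the p-value vector
    (hSPindep : IndepFun (fun ω j => S j ω) (fun ω j => P j ω) μ)
    -- (iii) the null p-values are super-uniform
    (hPnull : ∀ j ∈ N, ∀ t ∈ Set.Icc (0 : ℝ) 1,
      μ {ω | P j ω ≤ t} ≤ ENNReal.ofReal t)
    -- (iv) the null e-values have expectation at most one
    (hSint : ∀ j, Integrable (S j) μ)
    (hSnull : ∀ j ∈ N, ∫ ω, S j ω ∂μ ≤ 1)
    (R V : Ω → ℕ)
    (hR : ∀ ω, R ω = sSup {r : ℕ | r ≤ m ∧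
      r ≤ (univ.filter (fun j : Fin m =>
        P j ω ≤ S j ω * ((r : ℝ) * α / m))).card})
    (hV : ∀ ω, V ω = (N.filter (fun j : Fin m =>
      P j ω ≤ S j ω * ((R ω : ℝ) * α / m))).card) :
    ∫ ω, (V ω : ℝ) / (max (R ω) 1 : ℕ) ∂μ ≤ ((N.card : ℝ) / m) * α := by
  have hc : 0 ≤ α / m := div_nonneg hα.1.le m.cast_nonneg
  have hRc (ω : Ω) : R ω = rejections (α / m) (S · ω) (P · ω) := by
    rw [hR, Nat.sSup_setOf_le_and_eq_findGreatest, rejections, Fintype.card_fin]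
    simp only [count, mul_div_assoc]
  have hfdp (ω : Ω) : (V ω : ℝ) / (max (R ω) 1 : ℕ) =
      ∑ j ∈ N, leaveOneOutTerm (α / m) (S · ω) (P · ω) j := by
    rw [hV, hRc]
    simp only [mul_div_assoc]
    exact card_div_max_rejections_eq_sum_leaveOneOutTerm N hc (hSpos · ω) (hPrange · ω |>.1)
  calc ∫ ω, (V ω : ℝ) / (max (R ω) 1 : ℕ) ∂μ
      = ∑ j ∈ N, ∫ ω, leaveOneOutTerm (α / m) (S · ω) (P · ω) j ∂μ := by
        simp_rw [hfdp]
        exact integral_finsetSum N fun j _ => integrable_leaveOneOutTerm hPmeas hSmeas _ j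
    _ ≤ ∑ j ∈ N, α / m * ∫ ω, S j ω ∂μ := sum_le_sum fun j hj =>
        integral_leaveOneOutTerm_le hPmeas hSmeas hPindep hSPindep hc (hPnull j hj) (hSint j)
          (hSpos j)
    _ ≤ ∑ j ∈ N, α / m := sum_le_sum fun j hj => mul_le_of_le_one_right hc (hSnull j hj)
    _ = N.card / m * α := by rw [sum_const, nsmul_eq_mul]; ring

/-- Method 1 (the ep-BH procedure) controls the FDR at level `π₀ α` (known-variance case):
given `m` mutually independent p-values `P j` with the null ones super-uniform, and a vector of
e-values `S` independent of the p-value vector with `E[S j] ≤ 1` for null `j`, the BH procedure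
applied to the adjusted p-values `P j / S j` at level `α` has FDR at most `(m₀/m) α`. -/
theorem method1_epBH_fdr_control
    {Ω : Type*} [MeasurableSpace Ω] (μ : Measure Ω) [IsProbabilityMeasure μ]
    (m : ℕ) (hm : 1 ≤ m) (α : ℝ) (hα : α ∈ Set.Ioo (0 : ℝ) 1)
    (N : Finset (Fin m))
    (P S : Fin m → Ω → ℝ)
    (hPmeas : ∀ j, Measurable (P j)) (hSmeas : ∀ j, Measurable (S j))
    (hPrange : ∀ j ω, P j ω ∈ Set.Icc (0 : ℝ) 1)
    (hSpos : ∀ j ω, 0 ≤ S j ω)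
    -- (i) the p-values are mutually independent
    (hPindep : iIndepFun P μ)
    -- (ii) the e-value vector is independent of the p-value vector
    (hSPindep : IndepFun (fun ω j => S j ω) (fun ω j => P j ω) μ)
    -- (iii) the null p-values are super-uniform
    (hPnull : ∀ j ∈ N, ∀ t ∈ Set.Icc (0 : ℝ) 1,
      μ {ω | P j ω ≤ t} ≤ ENNReal.ofReal t)
    -- (iv) the null e-values have expectation at most one
    (hSint : ∀ j, Integrable (S j) μ)
    (hSnull : ∀ j ∈ N, ∫ ω, S j ω ∂μ ≤ 1)
    (R V : Ω → ℕ)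
    (hR : ∀ ω, R ω = sSup {r : ℕ | r ≤ m ∧
      r ≤ (univ.filter (fun j : Fin m =>
        P j ω ≤ S j ω * ((r : ℝ) * α / m))).card})
    (hV : ∀ ω, V ω = (N.filter (fun j : Fin m =>
      P j ω ≤ S j ω * ((R ω : ℝ) * α / m))).card) :
    ∫ ω, (V ω : ℝ) / (max (R ω) 1 : ℕ) ∂μ ≤ ((N.card : ℝ) / m) * α :=
  method1_epBH_fdr_control_general μ m α hα N P S hPmeas hSmeas hPrange hSpos hPindep hSPindep
    hPnull hSint hSnull R V hR hV
end

section
/- Let X be an n×m real matrix with Σ = XᵀX symmetric and invertible, D a symmetric m×m real matrix, Ũ an n×m real matrix with ŨᵀŨ = I_m and ŨᵀX = 0, and B an m×m real matrix with BᵀB = 2D − DΣ⁻¹D. Then the matrix X̃ = XΣ⁻¹(Σ − D) + ŨB satisfies X̃ᵀX̃ = Σ and XᵀX̃ = Σ − D. -/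
open Matrix

/-- Validity of the knockoff construction of Barber and Candès: if `Σ = XᵀX` is invertible,
`D` is symmetric, `Ũ` has orthonormal columns orthogonal to the column space of `X`
(`ŨᵀŨ = I`, `ŨᵀX = 0`), and `BᵀB = 2D - DΣ⁻¹D`, then
`X̃ = XΣ⁻¹(Σ - D) + ŨB` satisfies `X̃ᵀX̃ = Σ` and `XᵀX̃ = Σ - D`. -/
theorem knockoff_construction_valid {n m : ℕ}
    (X Ut : Matrix (Fin n) (Fin m) ℝ) (Sg D B : Matrix (Fin m) (Fin m) ℝ)
    (hSg : Sg = Xᵀ * X) (hSgsymm : Sg.IsSymm) (hSgInv : IsUnit Sg)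
    (hDsymm : D.IsSymm)
    (hUt : Utᵀ * Ut = 1) (hUtX : Utᵀ * X = 0)
    (hB : Bᵀ * B = (2 : ℝ) • D - D * Sg⁻¹ * D)
    (Xt : Matrix (Fin n) (Fin m) ℝ)
    (hXt : Xt = X * Sg⁻¹ * (Sg - D) + Ut * B) :
    Xtᵀ * Xt = Sg ∧ Xᵀ * Xt = Sg - D := by
  have hdet : IsUnit Sg.det := (Matrix.isUnit_iff_isUnit_det Sg).mp hSgInv
  have hmul : Sg * Sg⁻¹ = 1 := Matrix.mul_nonsing_inv Sg hdet
  have hmul' : Sg⁻¹ * Sg = 1 := Matrix.nonsing_inv_mul Sg hdet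
  have hInvSymm : Sg⁻¹ᵀ = Sg⁻¹ := by
    rw [Matrix.transpose_nonsing_inv, hSgsymm.eq]
  have hXU : Xᵀ * Ut = 0 := by
    have := congrArg Matrix.transpose hUtX
    simpa using this
  have hXXt : Xᵀ * Xt = Sg - D := by
    rw [hXt, Matrix.mul_add]
    rw [show Xᵀ * (X * Sg⁻¹ * (Sg - D)) = (Xᵀ * X) * Sg⁻¹ * (Sg - D) by
      simp [Matrix.mul_assoc]]
    rw [← hSg, hmul, Matrix.one_mul]
    rw [show Xᵀ * (Ut * B) = (Xᵀ * Ut) * B by simp [Matrix.mul_assoc]]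
    rw [hXU, Matrix.zero_mul, add_zero]
  refine ⟨?_, hXXt⟩
  rw [hXt]
  have hT : (X * Sg⁻¹ * (Sg - D) + Ut * B)ᵀ
      = (Sg - D) * Sg⁻¹ * Xᵀ + Bᵀ * Utᵀ := by
    simp [Matrix.transpose_add, Matrix.transpose_mul, Matrix.transpose_sub,
      hInvSymm, hSgsymm.eq, hDsymm.eq, Matrix.mul_assoc]
  rw [hT, Matrix.add_mul, Matrix.mul_add, Matrix.mul_add]
  have h1 : (Sg - D) * Sg⁻¹ * Xᵀ * (X * Sg⁻¹ * (Sg - D))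
      = (Sg - D) * Sg⁻¹ * (Sg - D) := by
    calc (Sg - D) * Sg⁻¹ * Xᵀ * (X * Sg⁻¹ * (Sg - D))
        = (Sg - D) * Sg⁻¹ * (Xᵀ * X) * Sg⁻¹ * (Sg - D) := by
          simp [Matrix.mul_assoc]
      _ = (Sg - D) * Sg⁻¹ * (Sg - D) := by
          rw [← hSg]
          rw [show (Sg - D) * Sg⁻¹ * Sg * Sg⁻¹ * (Sg - D)
              = (Sg - D) * (Sg⁻¹ * Sg) * Sg⁻¹ * (Sg - D) by simp [Matrix.mul_assoc]]
          rw [hmul', Matrix.mul_one]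
  have h2 : (Sg - D) * Sg⁻¹ * Xᵀ * (Ut * B) = 0 := by
    rw [show (Sg - D) * Sg⁻¹ * Xᵀ * (Ut * B) = (Sg - D) * Sg⁻¹ * (Xᵀ * Ut) * B by
      simp [Matrix.mul_assoc]]
    rw [hXU, Matrix.mul_zero, Matrix.zero_mul]
  have h3 : Bᵀ * Utᵀ * (X * Sg⁻¹ * (Sg - D)) = 0 := by
    rw [show Bᵀ * Utᵀ * (X * Sg⁻¹ * (Sg - D)) = Bᵀ * (Utᵀ * X) * (Sg⁻¹ * (Sg - D)) by
      simp [Matrix.mul_assoc]]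
    rw [hUtX, Matrix.mul_zero, Matrix.zero_mul]
  have h4 : Bᵀ * Utᵀ * (Ut * B) = Bᵀ * B := by
    rw [show Bᵀ * Utᵀ * (Ut * B) = Bᵀ * (Utᵀ * Ut) * B by simp [Matrix.mul_assoc]]
    rw [hUt, Matrix.mul_one]
  rw [h1, h2, h3, h4, hB]
  have hexp : (Sg - D) * Sg⁻¹ * (Sg - D) = Sg - D - D + D * Sg⁻¹ * D := by
    rw [Matrix.sub_mul, Matrix.sub_mul, Matrix.mul_sub, Matrix.mul_sub]
    rw [hmul, Matrix.one_mul]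
    rw [Matrix.one_mul, Matrix.mul_assoc D Sg⁻¹ Sg, hmul', Matrix.mul_one]
    abel
  rw [hexp]
  have : ((2:ℝ) • D : Matrix (Fin m) (Fin m) ℝ) = D + D := two_smul ℝ D
  rw [this]
  abel
end

section
/- Let (Ω, 𝔄, ℙ) be a probability space, σ > 0, and ε : Ω → ℝⁿ a random vector whose coordinates ε₁,…,ε_n are mutually independent, each with law N(0, σ²). Let X and X̃ be n×m real matrices, Σ = XᵀX symmetric, and D a symmetric m×m real matrix with X̃ᵀX̃ = Σ and XᵀX̃ = Σ − D, and let β ∈ ℝᵐ and Y = Xβ + ε. Then the ℝᵐ-valued random vectors ω ↦ (X + X̃)ᵀ Y(ω) and ω ↦ (X − X̃)ᵀ Y(ω) are independent. -/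
/-!
Both statistics are linear images `A ε`, `B ε` of the isotropic Gaussian noise, shifted by the
deterministic vectors `A X β`, `B X β`. The pair `(A ε, B ε)` is jointly Gaussian with
cross-covariance `σ² A Bᵀ`, and for `A = (X + X̃)ᵀ`, `B = (X - X̃)ᵀ` the knockoff identities give
`A Bᵀ = D - Dᵀ = 0`. Uncorrelated jointly Gaussian vectors are independent.
-/

open Matrix MeasureTheory ProbabilityTheory
open scoped NNReal

theorem Matrix.add_transpose_mul_sub_eq_zero {R n m : Type*} [CommRing R] [Fintype n]
    {X Xt : Matrix n m R} (hgram : Xtᵀ * Xt = Xᵀ * X) (hsymm : (Xᵀ * Xt).IsSymm) :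
    (X + Xt)ᵀ * (X - Xt) = 0 := by
  have hcross : Xtᵀ * X = Xᵀ * Xt := by
    rw [← hsymm.eq, transpose_mul, transpose_transpose]
  rw [transpose_add, Matrix.add_mul, Matrix.mul_sub, Matrix.mul_sub, hgram, hcross,
    sub_add_sub_cancel, sub_self]

section GaussianVector

variable {Ω ι : Type*} [MeasurableSpace Ω] {μ : Measure Ω} [IsFiniteMeasure μ] [Fintype ι]
  {ε : Ω → ι → ℝ}

theorem covariance_mulVec_mulVec_of_iIndepFun {κ₁ κ₂ : Type*}
    (hε : ∀ k, MemLp (fun ω => ε ω k) 2 μ) (hindep : iIndepFun (fun k ω => ε ω k) μ)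
    (A : Matrix κ₁ ι ℝ) (B : Matrix κ₂ ι ℝ) (i : κ₁) (j : κ₂) :
    cov[fun ω => (A *ᵥ ε ω) i, fun ω => (B *ᵥ ε ω) j; μ]
      = ∑ k, A i k * B j k * Var[fun ω => ε ω k; μ] := by
  simp only [mulVec, dotProduct]
  rw [covariance_fun_sum_fun_sum (fun k => (hε k).const_mul _) (fun k => (hε k).const_mul _)]
  refine Finset.sum_congr rfl fun k _ => ?_
  rw [Finset.sum_eq_single k]
  · rw [covariance_const_mul_left, covariance_const_mul_right,
      covariance_self (hε k).aemeasurable, mul_assoc]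
  · intro l _ hlk
    rw [covariance_const_mul_left, covariance_const_mul_right,
      (hindep.indepFun hlk.symm).covariance_eq_zero (hε k) (hε l), mul_zero, mul_zero]
  · simp

theorem indepFun_mulVec_of_mul_transpose_eq_zero {κ₁ κ₂ : Type*} [Fintype κ₁] [Fintype κ₂]
    {m : ι → ℝ} {v : ℝ≥0} (hlaw : ∀ k, HasLaw (fun ω => ε ω k) (gaussianReal (m k) v) μ)
    (hindep : iIndepFun (fun k ω => ε ω k) μ)
    {A : Matrix κ₁ ι ℝ} {B : Matrix κ₂ ι ℝ} (hAB : A * Bᵀ = 0) :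
    IndepFun (fun ω => A *ᵥ ε ω) (fun ω => B *ᵥ ε ω) μ := by
  have hgauss : HasGaussianLaw ε μ :=
    hindep.hasGaussianLaw fun k => (hlaw k).hasGaussianLaw
  let L : (ι → ℝ) →L[ℝ] (κ₁ → ℝ) × (κ₂ → ℝ) :=
    LinearMap.toContinuousLinearMap ((mulVecLin A).prod (mulVecLin B))
  refine HasGaussianLaw.indepFun_of_covariance_eval (hgauss.map_fun L) fun i j => ?_
  rw [covariance_mulVec_mulVec_of_iIndepFun (fun k => (hgauss.eval k).memLp_two) hindep]
  simp_rw [(hlaw _).variance_eq, variance_id_gaussianReal, ← Finset.sum_mul]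
  have hij : ∑ k, A i k * B j k = 0 := by simpa [mul_apply] using congrFun₂ hAB i j
  rw [hij, zero_mul]

end GaussianVector

theorem knockoff_statistics_independent_general {n m : ℕ}
    {Ω : Type*} [MeasurableSpace Ω] (μ : Measure Ω) [IsProbabilityMeasure μ]
    (σ : ℝ)
    (ε : Ω → Fin n → ℝ)
    (hmeas : ∀ i, Measurable (fun ω => ε ω i))
    (hindep : iIndepFun (fun i ω => ε ω i) μ)
    (hgauss : ∀ i, Measure.map (fun ω => ε ω i) μ
      = gaussianReal 0 (⟨σ ^ 2, sq_nonneg σ⟩ : NNReal))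
    (X Xt : Matrix (Fin n) (Fin m) ℝ) (Sg D : Matrix (Fin m) (Fin m) ℝ)
    (hSg : Sg = Xᵀ * X) (hDsymm : D.IsSymm)
    (hXt : Xtᵀ * Xt = Sg) (hXXt : Xᵀ * Xt = Sg - D)
    (β : Fin m → ℝ) (Y : Ω → Fin n → ℝ) (hY : ∀ ω, Y ω = X *ᵥ β + ε ω) :
    IndepFun (fun ω => (X + Xt)ᵀ *ᵥ Y ω) (fun ω => (X - Xt)ᵀ *ᵥ Y ω) μ := by
  subst hSg
  have hlaw : ∀ i, HasLaw (fun ω => ε ω i) (gaussianReal 0 ⟨σ ^ 2, sq_nonneg σ⟩) μ :=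
    fun i => ⟨(hmeas i).aemeasurable, hgauss i⟩
  have hcross : (Xᵀ * Xt).IsSymm := by
    rw [hXXt]
    exact IsSymm.sub (transpose_mul Xᵀ X) hDsymm
  have horth : (X + Xt)ᵀ * ((X - Xt)ᵀ)ᵀ = 0 := by
    rw [transpose_transpose]
    exact add_transpose_mul_sub_eq_zero hXt hcross
  have hnoise := indepFun_mulVec_of_mul_transpose_eq_zero hlaw hindep horth
  have hshift : ∀ M : Matrix (Fin m) (Fin n) ℝ,
      (fun ω => M *ᵥ Y ω) = (fun z => M *ᵥ (X *ᵥ β) + z) ∘ fun ω => M *ᵥ ε ω := by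
    intro M
    funext ω
    rw [Function.comp_apply, hY, mulVec_add]
  rw [hshift, hshift]
  exact hnoise.comp (measurable_const_add _) (measurable_const_add _)

/-- Independence of the two knockoff-assisted linear statistics: in the Gaussian linear model
`Y = Xβ + ε` with `ε ~ N_n(0, σ²I_n)` (i.i.d. `N(0, σ²)` coordinates) and `X̃` a knockoff
matrix for `X` (`X̃ᵀX̃ = Σ = XᵀX`, `XᵀX̃ = Σ - D`, `Σ`, `D` symmetric), the random vectors
`(X + X̃)ᵀY` and `(X - X̃)ᵀY` are independent. -/
theorem knockoff_statistics_independent {n m : ℕ}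
    {Ω : Type*} [MeasurableSpace Ω] (μ : Measure Ω) [IsProbabilityMeasure μ]
    (σ : ℝ) (hσ : 0 < σ)
    (ε : Ω → Fin n → ℝ)
    (hmeas : ∀ i, Measurable (fun ω => ε ω i))
    (hindep : iIndepFun (fun i ω => ε ω i) μ)
    (hgauss : ∀ i, Measure.map (fun ω => ε ω i) μ
      = gaussianReal 0 (⟨σ ^ 2, sq_nonneg σ⟩ : NNReal))
    (X Xt : Matrix (Fin n) (Fin m) ℝ) (Sg D : Matrix (Fin m) (Fin m) ℝ)
    (hSg : Sg = Xᵀ * X) (hSgsymm : Sg.IsSymm) (hDsymm : D.IsSymm)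
    (hXt : Xtᵀ * Xt = Sg) (hXXt : Xᵀ * Xt = Sg - D)
    (β : Fin m → ℝ) (Y : Ω → Fin n → ℝ) (hY : ∀ ω, Y ω = X *ᵥ β + ε ω) :
    IndepFun (fun ω => (X + Xt)ᵀ *ᵥ Y ω) (fun ω => (X - Xt)ᵀ *ᵥ Y ω) μ :=
  knockoff_statistics_independent_general μ σ ε hmeas hindep hgauss X Xt Sg D hSg hDsymm hXt hXXt β
    Y hY
end

section
/- Let (Ω, 𝔄, ℙ) be a probability space, σ > 0, and ε : Ω → ℝⁿ a square-integrable random vector with E[ε_i] = 0 and E[ε_i ε_j] = σ² δ_{ij} for all i, j. Let X and X̃ be n×m real matrices, Σ = XᵀX symmetric, D symmetric with X̃ᵀX̃ = Σ and XᵀX̃ = Σ − D, assume 2Σ − D and D invertible, let β ∈ ℝᵐ, Y = Xβ + ε, β̂⁽¹⁾ = (2Σ−D)⁻¹(X+X̃)ᵀY and β̂⁽²⁾ = D⁻¹(X−X̃)ᵀY. Then for all j, k ∈ {1,…,m}: E[(β̂⁽¹⁾_j − β_j)(β̂⁽¹⁾_k − β_k)] = 2σ² ((2Σ−D)⁻¹)_{jk}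 and E[(β̂⁽²⁾_j − β_j)(β̂⁽²⁾_k − β_k)] = 2σ² (D⁻¹)_{jk}. -/
/-!
Both estimators have the form `β̂ = N⁻¹ Zᵀ Y` with `Z = X ± X̃`, `N = 2Σ - D` resp. `N = D`.
The knockoff relations give `ZᵀX = N`, so `β̂ - β = N⁻¹ Zᵀ ε` is a fixed linear image of the
noise, and `ZᵀZ = 2N`. For uncorrelated noise of variance `σ²` the covariance of `A ε` is
`σ² A Aᵀ`, which here is `σ² N⁻¹ (ZᵀZ) N⁻¹ = 2σ² N⁻¹`.
-/

open Matrix MeasureTheory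

section Covariance

variable {Ω ι κ : Type*} [MeasurableSpace Ω] {μ : Measure Ω} [Fintype ι] [DecidableEq ι]

theorem integral_mulVec_mul_mulVec_of_uncorrelated {σ : ℝ} {ε : Ω → ι → ℝ}
    (hL2 : ∀ i, MemLp (fun ω => ε ω i) 2 μ)
    (hcov : ∀ i j, ∫ ω, ε ω i * ε ω j ∂μ = if i = j then σ ^ 2 else 0)
    (A : Matrix κ ι ℝ) (j k : κ) :
    ∫ ω, (A *ᵥ ε ω) j * (A *ᵥ ε ω) k ∂μ = σ ^ 2 * (A * Aᵀ) j k := by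
  have hint : ∀ i i', Integrable (fun ω => A j i * A k i' * (ε ω i * ε ω i')) μ :=
    fun i i' => ((hL2 i).integrable_mul (hL2 i')).const_mul _
  have hexpand : ∀ ω, (A *ᵥ ε ω) j * (A *ᵥ ε ω) k
      = ∑ i, ∑ i', A j i * A k i' * (ε ω i * ε ω i') := by
    intro ω
    simp only [mulVec, dotProduct, Finset.sum_mul_sum]
    exact Finset.sum_congr rfl fun i _ => Finset.sum_congr rfl fun i' _ => by ring
  simp_rw [hexpand]
  rw [integral_finsetSum _ fun i _ => integrable_finsetSum _ fun i' _ => hint i i']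
  simp_rw [integral_finsetSum _ fun i' _ => hint _ i', integral_const_mul, hcov]
  simp [mul_apply, Finset.mul_sum, mul_comm]

end Covariance

section LinearAlgebra

variable {ι κ R : Type*} [Fintype ι] [Fintype κ] [DecidableEq κ] [CommRing R]

theorem nonsing_inv_mulVec_transpose_mulVec_add {N : Matrix κ κ R} {X Z : Matrix ι κ R}
    (hN : IsUnit N) (hZX : Zᵀ * X = N) (β : κ → R) (e : ι → R) :
    N⁻¹ *ᵥ (Zᵀ *ᵥ (X *ᵥ β + e)) = β + (N⁻¹ * Zᵀ) *ᵥ e := by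
  rw [mulVec_add, mulVec_add, mulVec_mulVec, mulVec_mulVec, mulVec_mulVec, Matrix.mul_assoc,
    hZX, nonsing_inv_mul N ((isUnit_iff_isUnit_det N).mp hN), one_mulVec]

theorem nonsing_inv_mul_transpose_mul_transpose {N : Matrix κ κ R} {Z : Matrix ι κ R} {c : R}
    (hN : IsUnit N) (hNsymm : N.IsSymm) (hZZ : Zᵀ * Z = c • N) :
    (N⁻¹ * Zᵀ) * (N⁻¹ * Zᵀ)ᵀ = c • N⁻¹ :=
  calc (N⁻¹ * Zᵀ) * (N⁻¹ * Zᵀ)ᵀ = N⁻¹ * (Zᵀ * Z) * N⁻¹ := by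
        rw [transpose_mul, transpose_transpose, transpose_nonsing_inv, hNsymm.eq]
        simp only [Matrix.mul_assoc]
    _ = c • N⁻¹ := by
        rw [hZZ, Matrix.mul_smul, Matrix.smul_mul,
          nonsing_inv_mul N ((isUnit_iff_isUnit_det N).mp hN), Matrix.one_mul]

end LinearAlgebra

theorem covariance_nonsing_inv_transpose_mulVec {Ω ι κ : Type*} [MeasurableSpace Ω]
    {μ : Measure Ω} [Fintype ι] [DecidableEq ι] [Fintype κ] [DecidableEq κ]
    {σ : ℝ} {ε : Ω → ι → ℝ}
    (hL2 : ∀ i, MemLp (fun ω => ε ω i) 2 μ)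
    (hcov : ∀ i j, ∫ ω, ε ω i * ε ω j ∂μ = if i = j then σ ^ 2 else 0)
    {X Z : Matrix ι κ ℝ} {N : Matrix κ κ ℝ} (hN : IsUnit N) (hNsymm : N.IsSymm)
    {c : ℝ} (hZX : Zᵀ * X = N) (hZZ : Zᵀ * Z = c • N) (β : κ → ℝ) (j k : κ) :
    ∫ ω, ((N⁻¹ *ᵥ (Zᵀ *ᵥ (X *ᵥ β + ε ω))) j - β j)
        * ((N⁻¹ *ᵥ (Zᵀ *ᵥ (X *ᵥ β + ε ω))) k - β k) ∂μ = c * σ ^ 2 * N⁻¹ j k := by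
  simp_rw [nonsing_inv_mulVec_transpose_mulVec_add hN hZX, Pi.add_apply, add_sub_cancel_left]
  rw [integral_mulVec_mul_mulVec_of_uncorrelated hL2 hcov,
    nonsing_inv_mul_transpose_mul_transpose hN hNsymm hZZ, Matrix.smul_apply, smul_eq_mul]
  ring

section Knockoff

variable {ι κ R : Type*} [Fintype ι] [CommRing R] {X Xt : Matrix ι κ R} {D : Matrix κ κ R}

theorem knockoff_transpose_mul (hD : D.IsSymm) (hXXt : Xᵀ * Xt = Xᵀ * X - D) :
    Xtᵀ * X = Xᵀ * X - D := by
  rw [← transpose_transpose (Xtᵀ * X), transpose_mul, transpose_transpose, hXXt, transpose_sub,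
    transpose_mul, transpose_transpose, hD.eq]

theorem knockoff_add_transpose_mul (hD : D.IsSymm) (hXXt : Xᵀ * Xt = Xᵀ * X - D) :
    (X + Xt)ᵀ * X = (2 : R) • (Xᵀ * X) - D := by
  rw [transpose_add, Matrix.add_mul, knockoff_transpose_mul hD hXXt, two_smul]
  abel

theorem knockoff_add_gram (hD : D.IsSymm) (hXt : Xtᵀ * Xt = Xᵀ * X)
    (hXXt : Xᵀ * Xt = Xᵀ * X - D) :
    (X + Xt)ᵀ * (X + Xt) = (2 : R) • ((2 : R) • (Xᵀ * X) - D) := by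
  rw [transpose_add, Matrix.add_mul, Matrix.mul_add, Matrix.mul_add, hXXt,
    knockoff_transpose_mul hD hXXt, hXt]
  module

theorem knockoff_sub_transpose_mul (hD : D.IsSymm) (hXXt : Xᵀ * Xt = Xᵀ * X - D) :
    (X - Xt)ᵀ * X = D := by
  rw [transpose_sub, Matrix.sub_mul, knockoff_transpose_mul hD hXXt, sub_sub_cancel]

theorem knockoff_sub_gram (hD : D.IsSymm) (hXt : Xtᵀ * Xt = Xᵀ * X)
    (hXXt : Xᵀ * Xt = Xᵀ * X - D) :
    (X - Xt)ᵀ * (X - Xt) = (2 : R) • D := by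
  rw [transpose_sub, Matrix.sub_mul, Matrix.mul_sub, Matrix.mul_sub, hXXt,
    knockoff_transpose_mul hD hXXt, hXt]
  module

end Knockoff

theorem knockoff_estimators_covariance_general {n m : ℕ}
    {Ω : Type*} [MeasurableSpace Ω] (μ : Measure Ω)
    (σ : ℝ)
    (ε : Ω → Fin n → ℝ)
    (hL2 : ∀ i, MemLp (fun ω => ε ω i) 2 μ)
    (hcov : ∀ i j, ∫ ω, ε ω i * ε ω j ∂μ = if i = j then σ ^ 2 else 0)
    (X Xt : Matrix (Fin n) (Fin m) ℝ) (Sg D : Matrix (Fin m) (Fin m) ℝ)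
    (hSg : Sg = Xᵀ * X) (hDsymm : D.IsSymm)
    (hXt : Xtᵀ * Xt = Sg) (hXXt : Xᵀ * Xt = Sg - D)
    (hInv1 : IsUnit ((2 : ℝ) • Sg - D)) (hInv2 : IsUnit D)
    (β : Fin m → ℝ) (Y : Ω → Fin n → ℝ) (hY : ∀ ω, Y ω = X *ᵥ β + ε ω)
    (b1 b2 : Ω → Fin m → ℝ)
    (hb1 : ∀ ω, b1 ω = ((2 : ℝ) • Sg - D)⁻¹ *ᵥ ((X + Xt)ᵀ *ᵥ Y ω))
    (hb2 : ∀ ω, b2 ω = D⁻¹ *ᵥ ((X - Xt)ᵀ *ᵥ Y ω)) :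
    ∀ j k : Fin m,
      (∫ ω, (b1 ω j - β j) * (b1 ω k - β k) ∂μ
        = 2 * σ ^ 2 * (((2 : ℝ) • Sg - D)⁻¹) j k) ∧
      (∫ ω, (b2 ω j - β j) * (b2 ω k - β k) ∂μ = 2 * σ ^ 2 * (D⁻¹) j k) := by
  subst hSg
  have hXX : (Xᵀ * X).IsSymm := by rw [IsSymm, transpose_mul, transpose_transpose]
  have hM : ((2 : ℝ) • (Xᵀ * X) - D).IsSymm := (hXX.smul (2 : ℝ)).sub hDsymm
  intro j k
  simp_rw [hb1, hb2, hY]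
  constructor
  · exact covariance_nonsing_inv_transpose_mulVec hL2 hcov hInv1 hM
      (knockoff_add_transpose_mul hDsymm hXXt) (knockoff_add_gram hDsymm hXt hXXt) β j k
  · exact covariance_nonsing_inv_transpose_mulVec hL2 hcov hInv2 hDsymm
      (knockoff_sub_transpose_mul hDsymm hXXt) (knockoff_sub_gram hDsymm hXt hXXt) β j k

/-- Covariances of the knockoff-assisted estimators: in the linear model `Y = Xβ + ε` with
square-integrable, mean-zero, uncorrelated errors of common variance `σ²`, and with `X̃` a
knockoff matrix for `X` (`X̃ᵀX̃ = Σ = XᵀX`, `XᵀX̃ = Σ - D`, `Σ`, `D` symmetric, `2Σ - D`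
and `D` invertible), the estimators `β̂⁽¹⁾ = (2Σ - D)⁻¹(X + X̃)ᵀY` and
`β̂⁽²⁾ = D⁻¹(X - X̃)ᵀY` have covariance matrices `2σ²(2Σ - D)⁻¹` and `2σ²D⁻¹`. -/
theorem knockoff_estimators_covariance {n m : ℕ}
    {Ω : Type*} [MeasurableSpace Ω] (μ : Measure Ω) [IsProbabilityMeasure μ]
    (σ : ℝ) (hσ : 0 < σ)
    (ε : Ω → Fin n → ℝ)
    (hL2 : ∀ i, MemLp (fun ω => ε ω i) 2 μ)
    (hmean : ∀ i, ∫ ω, ε ω i ∂μ = 0)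
    (hcov : ∀ i j, ∫ ω, ε ω i * ε ω j ∂μ = if i = j then σ ^ 2 else 0)
    (X Xt : Matrix (Fin n) (Fin m) ℝ) (Sg D : Matrix (Fin m) (Fin m) ℝ)
    (hSg : Sg = Xᵀ * X) (hSgsymm : Sg.IsSymm) (hDsymm : D.IsSymm)
    (hXt : Xtᵀ * Xt = Sg) (hXXt : Xᵀ * Xt = Sg - D)
    (hInv1 : IsUnit ((2 : ℝ) • Sg - D)) (hInv2 : IsUnit D)
    (β : Fin m → ℝ) (Y : Ω → Fin n → ℝ) (hY : ∀ ω, Y ω = X *ᵥ β + ε ω)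
    (b1 b2 : Ω → Fin m → ℝ)
    (hb1 : ∀ ω, b1 ω = ((2 : ℝ) • Sg - D)⁻¹ *ᵥ ((X + Xt)ᵀ *ᵥ Y ω))
    (hb2 : ∀ ω, b2 ω = D⁻¹ *ᵥ ((X - Xt)ᵀ *ᵥ Y ω)) :
    ∀ j k : Fin m,
      (∫ ω, (b1 ω j - β j) * (b1 ω k - β k) ∂μ
        = 2 * σ ^ 2 * (((2 : ℝ) • Sg - D)⁻¹) j k) ∧
      (∫ ω, (b2 ω j - β j) * (b2 ω k - β k) ∂μ = 2 * σ ^ 2 * (D⁻¹) j k) :=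
  knockoff_estimators_covariance_general μ σ ε hL2 hcov X Xt Sg D hSg hDsymm hXt hXXt hInv1 hInv2 β
    Y hY b1 b2 hb1 hb2
end

section
/- Let (Ω, 𝔄, ℙ) be a probability space and P : Ω → [0,1] a random variable with ℙ(P ≤ t) ≤ t for every t ∈ [0,1]. Let g : [0,1] → [0,∞] be an antitone (decreasing) function with ∫₀¹ g(t) dt ≤ 1 (Lebesgue integral in [0,∞]). Then E[g(P)] ≤ 1, i.e., g(P) is an e-value. -/
open MeasureTheory Set
open scoped ENNReal

/-!
A super-uniform `P` is stochastically larger than a uniform variable on `[0,1]`: its distribution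
puts at most as much mass on every half-line `(-∞, t]`, hence, the uniform law having no atoms, on
every lower set of `ℝ`. The superlevel sets of a decreasing `g` are lower sets, so the layer cake
formula gives `E[g(P)] ≤ ∫₀¹ g ≤ 1` once `g` is extended to `ℝ` through the projection onto `[0,1]`.
-/

theorem volume_restrict_Ioi_setOf_ofReal_lt (a : ℝ≥0∞) :
    volume.restrict (Ioi (0 : ℝ)) {s | ENNReal.ofReal s < a} = a := by
  rw [Measure.restrict_apply (measurableSet_lt ENNReal.measurable_ofReal measurable_const)]
  rcases eq_or_ne a ∞ with rfl | ha
  · simp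
  · have : {s : ℝ | ENNReal.ofReal s < a} ∩ Ioi 0 = Ioo 0 a.toReal := by
      ext s
      simp only [mem_inter_iff, mem_ofPred_eq, mem_Ioi, mem_Ioo]
      constructor
      · rintro ⟨hlt, hs⟩
        exact ⟨hs, (ENNReal.ofReal_lt_iff_lt_toReal hs.le ha).1 hlt⟩
      · rintro ⟨hs, hlt⟩
        exact ⟨(ENNReal.ofReal_lt_iff_lt_toReal hs.le ha).2 hlt, hs⟩
    rw [this, Real.volume_Ioo, sub_zero, ENNReal.ofReal_toReal ha]

theorem lintegral_eq_lintegral_meas_ofReal_lt {α : Type*} [MeasurableSpace α] (μ : Measure α)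
    [SFinite μ] {f : α → ℝ≥0∞} (hf : Measurable f) :
    ∫⁻ x, f x ∂μ = ∫⁻ s in Ioi 0, μ {x | ENNReal.ofReal s < f x} := by
  have hS : MeasurableSet {p : α × ℝ | ENNReal.ofReal p.2 < f p.1} :=
    measurableSet_lt (by fun_prop) (by fun_prop)
  calc ∫⁻ x, f x ∂μ = ∫⁻ x, volume.restrict (Ioi 0) {s | ENNReal.ofReal s < f x} ∂μ := by
        simp only [volume_restrict_Ioi_setOf_ofReal_lt]
    _ = (μ.prod (volume.restrict (Ioi 0))) {p | ENNReal.ofReal p.2 < f p.1} :=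
        (Measure.prod_apply hS).symm
    _ = ∫⁻ s in Ioi 0, μ {x | ENNReal.ofReal s < f x} := Measure.prod_apply_symm hS

theorem measure_le_of_isLowerSet_of_measure_Iic_le {μ ν : Measure ℝ} [NullSingletonClass ν]
    (h : ∀ t, μ (Iic t) ≤ ν (Iic t)) {L : Set ℝ} (hL : IsLowerSet L) : μ L ≤ ν L := by
  by_cases hbdd : BddAbove L
  · rcases L.eq_empty_or_nonempty with rfl | hne
    · simp
    calc μ L ≤ μ (Iic (sSup L)) := measure_mono fun x hx => le_csSup hbdd hx
      _ ≤ ν (Iic (sSup L)) := h _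
      _ = ν (Iio (sSup L)) := (measure_congr Iio_ae_eq_Iic).symm
      _ ≤ ν L := measure_mono fun x hx => by
          obtain ⟨y, hy, hxy⟩ := exists_lt_of_lt_csSup hne hx
          exact hL hxy.le hy
  · have hL_univ : L = univ := eq_univ_of_forall fun x => by
      obtain ⟨y, hy, hxy⟩ := not_bddAbove_iff.1 hbdd x
      exact hL hxy.le hy
    rw [hL_univ]
    exact le_of_tendsto_of_tendsto' (tendsto_measure_Iic_atTop μ) (tendsto_measure_Iic_atTop ν) h

theorem lintegral_antitone_le_of_measure_Iic_le {μ ν : Measure ℝ} [SFinite μ] [SFinite ν]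
    [NullSingletonClass ν]
    (h : ∀ t, μ (Iic t) ≤ ν (Iic t)) {f : ℝ → ℝ≥0∞} (hf : Antitone f) :
    ∫⁻ x, f x ∂μ ≤ ∫⁻ x, f x ∂ν := by
  rw [lintegral_eq_lintegral_meas_ofReal_lt μ hf.measurable,
    lintegral_eq_lintegral_meas_ofReal_lt ν hf.measurable]
  exact lintegral_mono fun s =>
    measure_le_of_isLowerSet_of_measure_Iic_le h fun _ _ hba ha => ha.trans_le (hf hba)

theorem measure_le_volume_Iic_inter_Icc {Ω : Type*} [MeasurableSpace Ω] (μ : Measure Ω)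
    [IsZeroOrProbabilityMeasure μ] {P : Ω → ℝ} (hPrange : ∀ ω, P ω ∈ Icc (0 : ℝ) 1)
    (hPsuper : ∀ t ∈ Icc (0 : ℝ) 1, μ {ω | P ω ≤ t} ≤ ENNReal.ofReal t) (t : ℝ) :
    μ {ω | P ω ≤ t} ≤ volume (Iic t ∩ Icc 0 1) := by
  rcases lt_or_ge t 0 with ht0 | ht0
  · have : {ω | P ω ≤ t} = ∅ :=
      eq_empty_of_forall_notMem fun ω hω => (hω.trans_lt ht0).not_ge (hPrange ω).1
    simp [this]
  rcases le_or_gt t 1 with ht1 | ht1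
  · have : Iic t ∩ Icc 0 1 = Icc 0 t := by
      ext x; simp only [mem_inter_iff, mem_Iic, mem_Icc]; grind
    rw [this, Real.volume_Icc, sub_zero]
    exact hPsuper t ⟨ht0, ht1⟩
  · rw [inter_eq_right.2 (Icc_subset_Iic_self.trans (Iic_subset_Iic.2 ht1.le)), Real.volume_Icc,
      sub_zero, ENNReal.ofReal_one]
    exact prob_le_one

/-- Calibration: applying a p-to-e calibrator to a p-value yields an e-value. If `P` is a
super-uniform p-value (`ℙ(P ≤ t) ≤ t` for all `t ∈ [0,1]`) and `g : [0,1] → [0,∞]` is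
decreasing with `∫₀¹ g(t) dt ≤ 1`, then `E[g(P)] ≤ 1`. -/
theorem calibrator_gives_evalue
    {Ω : Type*} [MeasurableSpace Ω] (μ : Measure Ω) [IsProbabilityMeasure μ]
    (P : Ω → ℝ) (hPmeas : Measurable P)
    (hPrange : ∀ ω, P ω ∈ Set.Icc (0 : ℝ) 1)
    (hPsuper : ∀ t ∈ Set.Icc (0 : ℝ) 1, μ {ω | P ω ≤ t} ≤ ENNReal.ofReal t)
    (g : ℝ → ENNReal)
    (hg : AntitoneOn g (Set.Icc (0 : ℝ) 1))
    (hgint : ∫⁻ t in Set.Icc (0 : ℝ) 1, g t ≤ 1) :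
    ∫⁻ ω, g (P ω) ∂μ ≤ 1 := by
  set g' : ℝ → ℝ≥0∞ := fun t => g (projIcc 0 1 zero_le_one t)
  have hg' : Antitone g' := fun a b hab =>
    hg (projIcc 0 1 _ a).2 (projIcc 0 1 _ b).2 (monotone_projIcc _ hab)
  have hg'_eq : ∀ t ∈ Icc (0 : ℝ) 1, g' t = g t := fun t ht => by
    simp only [g', projIcc_of_mem _ ht]
  have hdom : ∀ t, μ.map P (Iic t) ≤ volume.restrict (Icc 0 1) (Iic t) := fun t => by
    rw [Measure.map_apply hPmeas measurableSet_Iic, Measure.restrict_apply measurableSet_Iic]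
    exact measure_le_volume_Iic_inter_Icc μ hPrange hPsuper t
  calc ∫⁻ ω, g (P ω) ∂μ = ∫⁻ t, g' t ∂(μ.map P) := by
        rw [lintegral_map hg'.measurable hPmeas]
        exact lintegral_congr fun ω => (hg'_eq _ (hPrange ω)).symm
    _ ≤ ∫⁻ t in Icc 0 1, g' t := lintegral_antitone_le_of_measure_Iic_le hdom hg'
    _ = ∫⁻ t in Icc 0 1, g t := setLIntegral_congr_fun measurableSet_Icc hg'_eq
    _ ≤ 1 := hgint
end

section
/- Let α ∈ (0,1), m ≥ 1 a natural number, j ∈ {1,…,m}, p₁ ∈ [0,1] and p₂ ∈ (0,1]. Define S = (1/√α)·𝟙(p₁ ≤ √α) and Q̃ = p₂ if p₁ ≤ √α, and Q̃ = 1 otherwise. Then the following are equivalent: (i) S > 0 and p₂ / S ≤ jα/m; (ii) Q̃ ≤ j√α/m. Consequently, the ep-BH procedure at level α using the all-or-nothing e-values S = g₁(P⁽¹⁾) rejects exactly the same hypotheses as the BH procedure at level √α applied to the Bon-BH p-values Q̃. -/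
/-- Equivalence of the ep-BH rejection rule with the all-or-nothing e-value
`S = (1/√α)·𝟙(p₁ ≤ √α)` and the Bon-BH rejection rule with
`Q̃ = p₂·𝟙(p₁ ≤ √α) + 𝟙(p₁ > √α)`: for `α ∈ (0,1)`, `1 ≤ j ≤ m`, `p₁ ∈ [0,1]`,
`p₂ ∈ (0,1]`, one has `S > 0 ∧ p₂/S ≤ jα/m` if and only if `Q̃ ≤ j√α/m`; hence the
ep-BH procedure at level `α` makes the same rejections as the BH procedure at level
`√α` applied to the Bon-BH p-values. -/
theorem epBH_eq_BonBH
    (α : ℝ) (hα : α ∈ Set.Ioo (0 : ℝ) 1)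
    (m : ℕ) (hm : 1 ≤ m) (j : ℕ) (hj1 : 1 ≤ j) (hjm : j ≤ m)
    (p1 p2 : ℝ) (hp1 : p1 ∈ Set.Icc (0 : ℝ) 1) (hp2 : p2 ∈ Set.Ioc (0 : ℝ) 1)
    (S Q : ℝ)
    (hS : S = if p1 ≤ Real.sqrt α then 1 / Real.sqrt α else 0)
    (hQ : Q = if p1 ≤ Real.sqrt α then p2 else 1) :
    (0 < S ∧ p2 / S ≤ (j : ℝ) * α / m) ↔ Q ≤ (j : ℝ) * Real.sqrt α / m := by
  obtain ⟨hα0, hα1⟩ := hα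
  have hs0 : 0 < Real.sqrt α := Real.sqrt_pos.mpr hα0
  have hs1 : Real.sqrt α < 1 := by
    rw [show (1:ℝ) = Real.sqrt 1 by simp]
    exact Real.sqrt_lt_sqrt hα0.le hα1
  have hmR : (0:ℝ) < m := by exact_mod_cast hm
  have hjR : (0:ℝ) < j := by exact_mod_cast hj1
  have hsq : Real.sqrt α * Real.sqrt α = α := Real.mul_self_sqrt hα0.le
  by_cases h : p1 ≤ Real.sqrt α
  · simp only [hS, hQ, if_pos h]
    constructor
    · rintro ⟨-, h2⟩
      rw [div_div_eq_mul_div, div_le_div_iff₀ (by norm_num : (0:ℝ) < 1) hmR] at h2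
      rw [le_div_iff₀ hmR]
      nlinarith [hs0, hsq]
    · intro h2
      refine ⟨by positivity, ?_⟩
      rw [div_div_eq_mul_div, div_le_div_iff₀ (by norm_num : (0:ℝ) < 1) hmR]
      rw [le_div_iff₀ hmR] at h2
      nlinarith [hs0, hsq]
  · simp only [hS, hQ, if_neg h]
    constructor
    · rintro ⟨h0, -⟩; exact absurd h0 (lt_irrefl 0)
    · intro h2
      exfalso
      have hjm' : (j:ℝ) ≤ m := by exact_mod_cast hjm
      have : (j:ℝ) * Real.sqrt α / m < 1 := by
        rw [div_lt_one hmR]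
        nlinarith
      linarith
end

section
/- Let (Ω, 𝔄, ℙ) be a probability space, λ ∈ (0,1), n₀ ≥ 1, and let P₁,…,P_{n₀} : Ω → [0,1] be mutually independent random variables with ℙ(P_k > λ) ≥ 1 − λ for every k. Then E[ 1 / (1 + card{ k ∈ {1,…,n₀} : P_k(ω) > λ }) ] ≤ 1 / ((n₀ + 1)(1 − λ)). In particular, if B is a binomial random variable with n trials and success probability q ∈ (0,1], then E[1/(1+B)] ≤ 1/((n+1)q). -/
open MeasureTheory ProbabilityTheory Finset

/-!
Let `N = ∑ₖ Xₖ` with `Xₖ = 𝟙(Pₖ > λ)`, independent with `ℙ(Xₖ = 1) ≥ p = 1 - λ`. For every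
antitone `f ≥ 0`, adding one more indicator `Y` independent of `N` gives
`E f(Y + N) = E f(N) - ℙ(Y = 1) E[f(N) - f(N + 1)] ≤ (1 - p) E f(N) + p E f(N + 1)`,
which is Pascal's recursion for binomial expectations; by induction `E f(N) ≤ E f(B)` with
`B ~ Bin(n₀, p)`. For `f k = 1 / (1 + k)`, the identity `(n + 1) C(n, k) / (k + 1) = C(n + 1, k + 1)`
turns `(n + 1) p E[1 / (1 + B)]` into `ℙ(B' ≥ 1) ≤ 1` for `B' ~ Bin(n + 1, p)`.
-/

/-- `E f(B)` for `B ~ Bin(n, p)`, summed over `i + j = n` to avoid truncated subtraction. -/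
noncomputable def binomialExpectation (p : ℝ) (n : ℕ) (f : ℕ → ℝ) : ℝ :=
  ∑ ij ∈ antidiagonal n, (n.choose ij.1 : ℝ) * (p ^ ij.1 * (1 - p) ^ ij.2 * f ij.1)

lemma binomialExpectation_eq_sum_range (p : ℝ) (n : ℕ) (f : ℕ → ℝ) :
    binomialExpectation p n f =
      ∑ k ∈ range (n + 1), (n.choose k : ℝ) * p ^ k * (1 - p) ^ (n - k) * f k := by
  rw [binomialExpectation,
    Nat.sum_antidiagonal_eq_sum_range_succ fun i j ↦ (n.choose i : ℝ) * (p ^ i * (1 - p) ^ j * f i)]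
  simp only [mul_assoc]

lemma binomialExpectation_succ (p : ℝ) (n : ℕ) (f : ℕ → ℝ) :
    binomialExpectation p (n + 1) f =
      (1 - p) * binomialExpectation p n f + p * binomialExpectation p n (fun k ↦ f (k + 1)) := by
  rw [binomialExpectation, sum_antidiagonal_choose_succ_mul (fun i j ↦ p ^ i * (1 - p) ^ j * f i),
    binomialExpectation, binomialExpectation, mul_sum, mul_sum]
  congr 1
  · exact sum_congr rfl fun ij _ ↦ by ring
  · refine sum_congr rfl fun ij hij ↦ ?_
    rw [← Nat.choose_symm_of_eq_add (mem_antidiagonal.mp hij).symm]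
    ring

lemma binomialExpectation_const_one (p : ℝ) (n : ℕ) :
    binomialExpectation p n (fun _ ↦ 1) = 1 := by
  have h := (Commute.all p (1 - p)).add_pow' n
  simp only [add_sub_cancel, one_pow, nsmul_eq_mul] at h
  simp only [binomialExpectation, mul_one]
  exact h.symm

lemma binomialExpectation_one_div_one_add_le {q : ℝ} (hq : 0 < q) (hq1 : q ≤ 1) (n : ℕ) :
    binomialExpectation q n (fun k ↦ 1 / (1 + k)) ≤ 1 / ((n + 1) * q) := by
  rw [le_div_iff₀ (by positivity)]
  have hshift : binomialExpectation q n (fun k ↦ 1 / (1 + k)) * ((n + 1) * q) =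
      ∑ ij ∈ antidiagonal n, ((n + 1).choose (ij.1 + 1) : ℝ) * (q ^ (ij.1 + 1) * (1 - q) ^ ij.2) := by
    rw [binomialExpectation, sum_mul]
    refine sum_congr rfl fun ij _ ↦ ?_
    have h := congrArg (Nat.cast (R := ℝ)) (Nat.add_one_mul_choose_eq n ij.1)
    push_cast at h
    field_simp
    linear_combination (q ^ ij.1 * q * (1 - q) ^ ij.2) * h
  have htotal := binomialExpectation_const_one q (n + 1)
  simp only [binomialExpectation, Nat.sum_antidiagonal_succ, Nat.choose_zero_right, Nat.cast_one,
    pow_zero, mul_one, one_mul] at htotal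
  have : 0 ≤ (1 - q) ^ (n + 1) := pow_nonneg (by linarith) _
  linarith

section
variable {Ω : Type*} [MeasurableSpace Ω] {μ : Measure Ω}

lemma integral_natCast_eq_measureReal {Y : Ω → ℕ} (hY : Measurable Y) (hY1 : ∀ ω, Y ω ≤ 1) :
    ∫ ω, (Y ω : ℝ) ∂μ = μ.real {ω | Y ω = 1} := by
  rw [← integral_indicator_one (s := {ω | Y ω = 1}) (hY (measurableSet_singleton 1))]
  refine integral_congr_ae (ae_of_all _ fun ω ↦ ?_)
  rcases Nat.le_one_iff_eq_zero_or_eq_one.mp (hY1 ω) with h | h <;> simp [h]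

variable [IsProbabilityMeasure μ]

lemma Antitone.integrable_comp {f : ℕ → ℝ} (hf : Antitone f) (hf0 : 0 ≤ f) {N : Ω → ℕ}
    (hN : Measurable N) : Integrable (fun ω ↦ f (N ω)) μ :=
  .of_bound (measurable_from_nat.comp hN).aestronglyMeasurable (f 0) <| ae_of_all _ fun ω ↦ by
    rw [Real.norm_of_nonneg (hf0 _)]
    exact hf (Nat.zero_le _)

lemma integral_comp_add_le_of_indepFun {Y N : Ω → ℕ} (hY : Measurable Y) (hN : Measurable N)
    (hY1 : ∀ ω, Y ω ≤ 1) (hYN : IndepFun Y N μ) {p : ℝ} (hp : p ≤ μ.real {ω | Y ω = 1})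
    {f : ℕ → ℝ} (hf : Antitone f) (hf0 : 0 ≤ f) :
    ∫ ω, f (Y ω + N ω) ∂μ ≤ (1 - p) * ∫ ω, f (N ω) ∂μ + p * ∫ ω, f (N ω + 1) ∂μ := by
  have hpt : ∀ ω, f (Y ω + N ω) = f (N ω) - (Y ω : ℝ) * (f (N ω) - f (N ω + 1)) := by
    intro ω
    rcases Nat.le_one_iff_eq_zero_or_eq_one.mp (hY1 ω) with h | h <;> simp [h, add_comm]
  have hfN := hf.integrable_comp (μ := μ) hf0 hN
  have hfN1 := hf.integrable_comp (μ := μ) hf0 (hN.add_const 1)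
  have hYg : Integrable (fun ω ↦ (Y ω : ℝ) * (f (N ω) - f (N ω + 1))) μ :=
    (hfN.sub hfN1).bdd_mul (c := 1) (measurable_from_nat.comp hY).aestronglyMeasurable
      (ae_of_all _ fun ω ↦ by simpa using hY1 ω)
  have hprod : ∫ ω, (Y ω : ℝ) * (f (N ω) - f (N ω + 1)) ∂μ =
      μ.real {ω | Y ω = 1} * (∫ ω, f (N ω) ∂μ - ∫ ω, f (N ω + 1) ∂μ) := by
    rw [hYN.integral_fun_comp_mul_comp hY.aemeasurable hN.aemeasurable
      (measurable_from_nat (f := fun n ↦ (n : ℝ))).aestronglyMeasurable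
      (measurable_from_nat (f := fun n ↦ f n - f (n + 1))).aestronglyMeasurable,
      integral_natCast_eq_measureReal hY hY1, integral_sub hfN hfN1]
  have hgap : 0 ≤ ∫ ω, f (N ω) ∂μ - ∫ ω, f (N ω + 1) ∂μ := by
    rw [← integral_sub hfN hfN1]
    exact integral_nonneg fun ω ↦ sub_nonneg.2 (hf (Nat.le_succ _))
  rw [integral_congr_ae (ae_of_all _ hpt), integral_sub hfN hYg, hprod]
  nlinarith

theorem integral_comp_sum_le_binomialExpectation {ι : Type*} {X : ι → Ω → ℕ}
    (hX : ∀ k, Measurable (X k)) (hX1 : ∀ k ω, X k ω ≤ 1) (hind : iIndepFun X μ)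
    {p : ℝ} (hp0 : 0 ≤ p) (hp : ∀ k, p ≤ μ.real {ω | X k ω = 1}) (s : Finset ι)
    {f : ℕ → ℝ} (hf : Antitone f) (hf0 : 0 ≤ f) :
    ∫ ω, f (∑ k ∈ s, X k ω) ∂μ ≤ binomialExpectation p s.card f := by
  classical
  induction s using Finset.induction_on generalizing f with
  | empty => simp [binomialExpectation]
  | insert j s hj ih =>
    have hN : Measurable fun ω ↦ ∑ k ∈ s, X k ω := Finset.measurable_sum s fun k _ ↦ hX k
    have hjN : IndepFun (X j) (fun ω ↦ ∑ k ∈ s, X k ω) μ := by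
      simpa only [Finset.sum_fn] using (hind.indepFun_finsetSum_of_notMem hX hj).symm
    have hp1 : 0 ≤ 1 - p := by linarith [hp j, measureReal_le_one (μ := μ) (s := {ω | X j ω = 1})]
    simp_rw [sum_insert hj]
    rw [card_insert_of_notMem hj, binomialExpectation_succ]
    calc _ ≤ (1 - p) * ∫ ω, f (∑ k ∈ s, X k ω) ∂μ + p * ∫ ω, f (∑ k ∈ s, X k ω + 1) ∂μ :=
          integral_comp_add_le_of_indepFun (hX j) hN (hX1 j) hjN (hp j) hf hf0
      _ ≤ _ := by
          gcongr
          · exact ih hf hf0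
          · exact ih (hf.comp_monotone fun _ _ h ↦ Nat.succ_le_succ h) fun n ↦ hf0 (n + 1)

end

theorem storey_leave_one_out_bound_general
    {Ω : Type*} [MeasurableSpace Ω] (μ : Measure Ω) [IsProbabilityMeasure μ]
    (lam : ℝ) (hlam : lam ∈ Set.Ioo (0 : ℝ) 1)
    (n₀ : ℕ)
    (P : Fin n₀ → Ω → ℝ)
    (hPmeas : ∀ k, Measurable (P k))
    (hPindep : iIndepFun P μ)
    (hPtail : ∀ k, ENNReal.ofReal (1 - lam) ≤ μ {ω | lam < P k ω}) :
    (∫ ω, 1 / (1 + ((univ.filter (fun k : Fin n₀ => lam < P k ω)).card : ℝ)) ∂μ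
      ≤ 1 / (((n₀ : ℝ) + 1) * (1 - lam))) ∧
    (∀ n : ℕ, ∀ q : ℝ, 0 < q → q ≤ 1 →
      ∑ k ∈ Finset.range (n + 1),
        (n.choose k : ℝ) * q ^ k * (1 - q) ^ (n - k) * (1 / (1 + (k : ℝ)))
        ≤ 1 / (((n : ℝ) + 1) * q)) := by
  refine ⟨?_, fun n q hq hq1 ↦
    binomialExpectation_eq_sum_range q n _ ▸ binomialExpectation_one_div_one_add_le hq hq1 n⟩
  let X : Fin n₀ → Ω → ℕ := fun k ω ↦ if lam < P k ω then 1 else 0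
  have hX : ∀ k, Measurable (X k) := fun k ↦
    Measurable.ite (measurableSet_lt measurable_const (hPmeas k)) measurable_const measurable_const
  have hXindep : iIndepFun X μ :=
    hPindep.comp (fun _ x ↦ if lam < x then 1 else 0) fun _ ↦
      Measurable.ite measurableSet_Ioi measurable_const measurable_const
  have hXtail : ∀ k, 1 - lam ≤ μ.real {ω | X k ω = 1} := fun k ↦ by
    simpa [X, measureReal_def] using
      (ENNReal.ofReal_le_iff_le_toReal (measure_ne_top _ _)).1 (hPtail k)
  have hanti : Antitone fun m : ℕ ↦ 1 / (1 + (m : ℝ)) := fun a b hab ↦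
    one_div_le_one_div_of_le (by positivity) (by gcongr)
  calc ∫ ω, 1 / (1 + ((univ.filter (fun k : Fin n₀ => lam < P k ω)).card : ℝ)) ∂μ
      = ∫ ω, 1 / (1 + ((∑ k, X k ω : ℕ) : ℝ)) ∂μ := by simp only [card_filter]; rfl
    _ ≤ binomialExpectation (1 - lam) n₀ fun m ↦ 1 / (1 + (m : ℝ)) := by
      simpa only [card_univ, Fintype.card_fin] using
        integral_comp_sum_le_binomialExpectation hX (fun k ω ↦ by dsimp only [X]; split_ifs <;> simp)
        hXindep (by linarith [hlam.2]) hXtail univ hanti fun m ↦ by positivity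
    _ ≤ 1 / ((n₀ + 1) * (1 - lam)) :=
      binomialExpectation_one_div_one_add_le (by linarith [hlam.2]) (by linarith [hlam.1]) n₀

/-- The key bound for Storey-type null-proportion estimators: if `P₁, …, P_{n₀}` are
mutually independent with `ℙ(P_k > λ) ≥ 1 - λ`, then
`E[1/(1 + #{k : P_k > λ})] ≤ 1/((n₀+1)(1-λ))`; in particular, for a binomial random
variable `B` with `n` trials and success probability `q ∈ (0,1]`,
`E[1/(1+B)] ≤ 1/((n+1)q)`. -/
theorem storey_leave_one_out_bound
    {Ω : Type*} [MeasurableSpace Ω] (μ : Measure Ω) [IsProbabilityMeasure μ]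
    (lam : ℝ) (hlam : lam ∈ Set.Ioo (0 : ℝ) 1)
    (n₀ : ℕ) (hn₀ : 1 ≤ n₀)
    (P : Fin n₀ → Ω → ℝ)
    (hPmeas : ∀ k, Measurable (P k))
    (hPindep : iIndepFun P μ)
    (hPtail : ∀ k, ENNReal.ofReal (1 - lam) ≤ μ {ω | lam < P k ω}) :
    (∫ ω, 1 / (1 + ((univ.filter (fun k : Fin n₀ => lam < P k ω)).card : ℝ)) ∂μ
      ≤ 1 / (((n₀ : ℝ) + 1) * (1 - lam))) ∧
    (∀ n : ℕ, ∀ q : ℝ, 0 < q → q ≤ 1 →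
      ∑ k ∈ Finset.range (n + 1),
        (n.choose k : ℝ) * q ^ k * (1 - q) ^ (n - k) * (1 / (1 + (k : ℝ)))
        ≤ 1 / (((n : ℝ) + 1) * q)) :=
  storey_leave_one_out_bound_general μ lam hlam n₀ P hPmeas hPindep hPtail
end

section
/- Let m ≥ 1, α ∈ (0,1], and p : {1,…,m} → ℝ with 0 ≤ p_i ≤ 1 for all i. Define R = max{ r ∈ {0,1,…,m} : card{ i : p_i ≤ rα/m } ≥ r }, and for a fixed index j define the leave-one-out count R_{-j} = max{ r ∈ {0,1,…,m−1} : card{ i ≠ j : p_i ≤ (r+1)α/m } ≥ r }. If p_j ≤ Rα/m and R ≥ 1, then R = R_{-j} + 1. In particular, on the event that hypothesis j is rejected by the BH procedure, 𝟙(p_j ≤ Rα/m)/R = 𝟙(p_j ≤ (R_{-j}+1)α/m)/(R_{-j}+1). -/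
open Finset

/-- Leave-one-out identity for the BH procedure: with
`R = max{ r ∈ {0,…,m} : #{ i : p_i ≤ rα/m } ≥ r }` and
`R₋ⱼ = max{ r ∈ {0,…,m-1} : #{ i ≠ j : p_i ≤ (r+1)α/m } ≥ r }`, if hypothesis `j` is
rejected (`p_j ≤ Rα/m` with `R ≥ 1`) then `R = R₋ⱼ + 1`; in particular on that event
`𝟙(p_j ≤ Rα/m)/R = 𝟙(p_j ≤ (R₋ⱼ+1)α/m)/(R₋ⱼ+1)`. -/
theorem BH_leave_one_out
    (m : ℕ) (hm : 1 ≤ m) (α : ℝ) (hα : α ∈ Set.Ioc (0 : ℝ) 1)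
    (p : Fin m → ℝ) (hp : ∀ i, p i ∈ Set.Icc (0 : ℝ) 1)
    (j : Fin m) (R Rj : ℕ)
    (hR : R = sSup {r : ℕ | r ≤ m ∧
      r ≤ (univ.filter (fun i : Fin m => p i ≤ (r : ℝ) * α / m)).card})
    (hRj : Rj = sSup {r : ℕ | r ≤ m - 1 ∧
      r ≤ ((univ.erase j).filter
        (fun i : Fin m => p i ≤ ((r : ℝ) + 1) * α / m)).card})
    (hrej : p j ≤ (R : ℝ) * α / m) (hR1 : 1 ≤ R) :
    R = Rj + 1 ∧
    (if p j ≤ (R : ℝ) * α / m then (1 : ℝ) else 0) / R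
      = (if p j ≤ ((Rj : ℝ) + 1) * α / m then (1 : ℝ) else 0) / ((Rj : ℝ) + 1) := by
  obtain ⟨hα0, hα1⟩ := hα
  have hm0 : (0:ℝ) < m := by exact_mod_cast hm
  have hSbdd : BddAbove {r : ℕ | r ≤ m ∧
      r ≤ (univ.filter (fun i : Fin m => p i ≤ (r : ℝ) * α / m)).card} :=
    ⟨m, fun r hr => hr.1⟩
  have hSjbdd : BddAbove {r : ℕ | r ≤ m - 1 ∧
      r ≤ ((univ.erase j).filter
        (fun i : Fin m => p i ≤ ((r : ℝ) + 1) * α / m)).card} :=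
    ⟨m - 1, fun r hr => hr.1⟩
  have hRS : R ≤ m ∧ R ≤ (univ.filter (fun i : Fin m => p i ≤ (R : ℝ) * α / m)).card := by
    rw [hR]; exact Nat.sSup_mem ⟨0, show _ ∧ _ from ⟨Nat.zero_le _, Nat.zero_le _⟩⟩ hSbdd
  have hRjS : Rj ≤ m - 1 ∧ Rj ≤ ((univ.erase j).filter
      (fun i : Fin m => p i ≤ ((Rj : ℝ) + 1) * α / m)).card := by
    rw [hRj]; exact Nat.sSup_mem ⟨0, show _ ∧ _ from ⟨Nat.zero_le _, Nat.zero_le _⟩⟩ hSjbdd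
  have hjmem : ∀ t : ℝ, p j ≤ t →
      ((univ.erase j).filter (fun i : Fin m => p i ≤ t)).card + 1
        = (univ.filter (fun i : Fin m => p i ≤ t)).card := by
    intro t ht
    have hjf : j ∈ univ.filter (fun i : Fin m => p i ≤ t) :=
      mem_filter.mpr ⟨mem_univ j, ht⟩
    have hpos : 0 < (univ.filter (fun i : Fin m => p i ≤ t)).card :=
      card_pos.mpr ⟨j, hjf⟩
    rw [filter_erase, card_erase_of_mem hjf]
    omega
  have hcast : ((R - 1 : ℕ) : ℝ) + 1 = (R : ℝ) := by
    rw [Nat.cast_sub hR1]; push_cast; ring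
  have h1 : R - 1 ∈ {r : ℕ | r ≤ m - 1 ∧
      r ≤ ((univ.erase j).filter
        (fun i : Fin m => p i ≤ ((r : ℝ) + 1) * α / m)).card} := by
    constructor
    · omega
    · have := hjmem ((R : ℝ) * α / m) hrej
      simp only [hcast]
      omega
  have hRjge : R - 1 ≤ Rj := by rw [hRj]; exact le_csSup hSjbdd h1
  have hle : R ≤ Rj + 1 := by omega
  have hpj2 : p j ≤ ((Rj : ℝ) + 1) * α / m := by
    refine hrej.trans ?_
    gcongr
    exact_mod_cast hle
  have h2 : Rj + 1 ∈ {r : ℕ | r ≤ m ∧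
      r ≤ (univ.filter (fun i : Fin m => p i ≤ (r : ℝ) * α / m)).card} := by
    constructor
    · omega
    · have hc : ((Rj + 1 : ℕ) : ℝ) = (Rj : ℝ) + 1 := by push_cast; ring
      simp only [hc]
      have := hjmem (((Rj : ℝ) + 1) * α / m) hpj2
      omega
  have hge : Rj + 1 ≤ R := by rw [hR]; exact le_csSup hSbdd h2
  have hmain : R = Rj + 1 := le_antisymm hle hge
  refine ⟨hmain, ?_⟩
  rw [hmain]
  push_cast
  ring_nf
end
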